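/- Let N be a positive integer, z ∈ ℂ, and let u be a generalised eigenvector associated with z with (u_0, u_1)ᵗ = α ∈ 𝓗 ⊕ 𝓗. Then for every n ≥ 1: |S_{n+1}(α, z) − S_n(α, z)| ≤ ‖X_n(z)‖·‖a_{n+N}‖·(‖a_{n+N}^{-1} a_{n+N-1}^* − a_n^{-1} a_{n-1}^*‖ + |z|·‖a_{n+N}^{-1} − a_n^{-1}‖ + |z − z̄|·‖a_{n+N}^{-1}‖ + ‖a_{n+N}^{-1} b_{n+N} − a_n^{-1} b_n‖)·(‖u_{n-1}‖² + ‖u_n‖²). -/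

import Mathlib

open ContinuousLinearMap Filter
open scoped ENNReal NNReal
noncomputable section

variable {H : Type*} [NormedAddCommGroup H] [InnerProductSpace ℂ H] [CompleteSpace H]

/-- The Hilbert space direct sum `𝓗 ⊕ 𝓗`. -/
abbrev H2 (H : Type*) [NormedAddCommGroup H] [InnerProductSpace ℂ H] : Type _ :=
  WithLp 2 (H × H)

/-- The column vector `(x, y)ᵗ` as an element of `𝓗 ⊕ 𝓗`. -/
def pr (x y : H) : H2 H := (WithLp.equiv 2 (H × H)).symm (x, y)

/-- The block operator `[[A, B], [C, D]]` on `𝓗 ⊕ 𝓗`. -/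
def blk (A B C D : H →L[ℂ] H) : H2 H →L[ℂ] H2 H :=
  ((WithLp.prodContinuousLinearEquiv 2 ℂ H H).symm : (H × H) →L[ℂ] H2 H) ∘L
    ((A ∘L ContinuousLinearMap.fst ℂ H H + B ∘L ContinuousLinearMap.snd ℂ H H).prod
      (C ∘L ContinuousLinearMap.fst ℂ H H + D ∘L ContinuousLinearMap.snd ℂ H H)) ∘L
    ((WithLp.prodContinuousLinearEquiv 2 ℂ H H) : H2 H →L[ℂ] (H × H))

/-- The real part `sym X = (X + X^*)/2` of a bounded operator. -/
def sym {E : Type*} [NormedAddCommGroup E] [InnerProductSpace ℂ E] [CompleteSpace E]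
    (X : E →L[ℂ] E) : E →L[ℂ] E :=
  (2 : ℂ)⁻¹ • (X + ContinuousLinearMap.adjoint X)

/-- `X` is strictly positive: `⟨Xv, v⟩ ≥ c‖v‖²` for some `c > 0`. -/
def StrictlyPos {E : Type*} [NormedAddCommGroup E] [InnerProductSpace ℂ E] [CompleteSpace E]
    (X : E →L[ℂ] E) : Prop :=
  ∃ c > (0 : ℝ), ∀ v : E, c * ‖v‖ ^ 2 ≤ (inner ℂ (X v) v : ℂ).re

/-- `X'` is a two-sided bounded inverse of `X`. -/
def Inverts (X X' : H →L[ℂ] H) : Prop := X' ∘L X = 1 ∧ X ∘L X' = 1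

/-- The formal Jacobi matrix `𝒜`: `(𝒜u)₀ = b₀u₀ + a₀u₁`,
`(𝒜u)ₙ = aₙ₋₁^* uₙ₋₁ + bₙ uₙ + aₙ uₙ₊₁` for `n ≥ 1`. -/
def jacobiA (a b : ℕ → H →L[ℂ] H) (u : ℕ → H) : ℕ → H
  | 0 => b 0 (u 0) + a 0 (u 1)
  | n + 1 => adjoint (a n) (u n) + b (n + 1) (u (n + 1)) + a (n + 1) (u (n + 2))

/-- The generalised eigenvector recurrence
`aₙ₋₁^* uₙ₋₁ + bₙ uₙ + aₙ uₙ₊₁ = z uₙ` for all `n ≥ 1`. -/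
def GenEigRec (a b : ℕ → H →L[ℂ] H) (z : ℂ) (u : ℕ → H) : Prop :=
  ∀ n : ℕ, adjoint (a n) (u n) + b (n + 1) (u (n + 1)) + a (n + 1) (u (n + 2)) = z • u (n + 1)

/-- `u` is a generalised eigenvector associated with `z`. -/
def IsGenEig (a b : ℕ → H →L[ℂ] H) (z : ℂ) (u : ℕ → H) : Prop :=
  u ≠ 0 ∧ GenEigRec a b z u

/-- `u` belongs to `ℓ²(ℕ; 𝓗)`. -/
def MemL2 (u : ℕ → H) : Prop := Summable fun n => ‖u n‖ ^ 2

/-- The transfer matrix `Bₙ(z)`; here `a'` is the sequence of inverses `aₙ⁻¹`. -/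
def transfer (a a' b : ℕ → H →L[ℂ] H) (z : ℂ) (n : ℕ) : H2 H →L[ℂ] H2 H :=
  blk 0 1 (-(a' n ∘L adjoint (a (n - 1)))) (a' n ∘L (z • (1 : H →L[ℂ] H) - b n))

/-- `prodD B n k = B (n+k-1) ∘ ⋯ ∘ B n`. -/
def prodD (B : ℕ → (H2 H →L[ℂ] H2 H)) : ℕ → ℕ → (H2 H →L[ℂ] H2 H)
  | _, 0 => 1
  | n, k + 1 => B (n + k) ∘L prodD B n k

/-- `sym (diag(a_{n+N-1}, a_{n+N-1}^*) · E · Xₙ(z))` where `Xₙ(z) = B_{n+N-1}(z)⋯Bₙ(z)`. -/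
def turanOp (a a' b : ℕ → H →L[ℂ] H) (N : ℕ) (z : ℂ) (n : ℕ) : H2 H →L[ℂ] H2 H :=
  sym (blk (a (n + N - 1)) 0 0 (adjoint (a (n + N - 1))) ∘L blk 0 (-1) 1 0 ∘L
    prodD (transfer a a' b z) n N)

/-- The `N`-shifted Turán determinant `Sₙ(α, z)` of a generalised eigenvector `u`. -/
def turanS (a a' b : ℕ → H →L[ℂ] H) (N : ℕ) (z : ℂ) (u : ℕ → H) (n : ℕ) : ℝ :=
  (inner ℂ (turanOp a a' b N z n (pr (u (n - 1)) (u n))) (pr (u (n - 1)) (u n)) : ℂ).re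

/-- The family `{Q^z : z ∈ K}` is uniformly non-degenerated on `K`, where
`Qₙ^z(v) = ‖a_{n+N-1}‖⁻¹ ⟨sym(diag(a_{n+N-1}, a_{n+N-1}^*)·E·Xₙ(z)) v, v⟩`. -/
def UnifNonDeg (a a' b : ℕ → H →L[ℂ] H) (N : ℕ) (K : Set ℂ) : Prop :=
  ∃ c ≥ (1 : ℝ), ∃ M : ℕ, 1 ≤ M ∧ ∀ v : H2 H, ∀ z ∈ K, ∀ n : ℕ, M ≤ n →
    c⁻¹ * ‖v‖ ^ 2 ≤ |‖a (n + N - 1)‖⁻¹ * (inner ℂ (turanOp a a' b N z n v) v : ℂ).re| ∧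
    |‖a (n + N - 1)‖⁻¹ * (inner ℂ (turanOp a a' b N z n v) v : ℂ).re| ≤ c * ‖v‖ ^ 2

/-- The matrix `𝓑ᵢ(z) = [[0, Id], [−Rᵢ, z Tᵢ − Qᵢ]]`. -/
def calB (T Q R : ℕ → H →L[ℂ] H) (z : ℂ) (i : ℕ) : H2 H →L[ℂ] H2 H :=
  blk 0 1 (-(R i)) (z • T i - Q i)

/-- `ℱ(λ) = sym([[0, −C_{N-1}], [C_{N-1}^*, 0]] · 𝓑_{N-1}(λ)⋯𝓑₀(λ))` from Theorem B. -/
def calF (T Q R C : ℕ → H →L[ℂ] H) (N : ℕ) (lam : ℝ) : H2 H →L[ℂ] H2 H :=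
  sym (blk 0 (-(C (N - 1))) (adjoint (C (N - 1))) 0 ∘L prodD (calB T Q R (lam : ℂ)) 0 N)

/-- The quadratic-form operator of the commutator approach (`al` is the sequence `α`):
`sym [[α_{n-1} a_{n-1}^*, −α_{n-1}(λ − bₙ)], [0, αₙ aₙ^*]]`. -/
def commOp (a b al : ℕ → H →L[ℂ] H) (lam : ℝ) (n : ℕ) : H2 H →L[ℂ] H2 H :=
  sym (blk (al (n - 1) ∘L adjoint (a (n - 1)))
    (-(al (n - 1) ∘L ((lam : ℂ) • (1 : H →L[ℂ] H) - b n))) 0 (al n ∘L adjoint (a n)))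

/-- `Sₙ(α, λ)` of the commutator approach. -/
def commS (a b al : ℕ → H →L[ℂ] H) (lam : ℝ) (u : ℕ → H) (n : ℕ) : ℝ :=
  (inner ℂ (commOp a b al lam n (pr (u (n - 1)) (u n))) (pr (u (n - 1)) (u n)) : ℂ).re

/-- `sym [[αₙ aₙ^*, −(λ − bₙ) aₙ₋₁⁻¹ αₙ₋₁ aₙ], [0, aₙ^* aₙ₋₁⁻¹ αₙ₋₁ aₙ]]`;
its normalisation converges to `C(λ)`. -/
def climOp (a a' b al : ℕ → H →L[ℂ] H) (lam : ℝ) (n : ℕ) : H2 H →L[ℂ] H2 H :=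
  sym (blk (al n ∘L adjoint (a n))
    (-((((lam : ℂ) • (1 : H →L[ℂ] H) - b n)) ∘L a' (n - 1) ∘L al (n - 1) ∘L a n))
    0
    (adjoint (a n) ∘L a' (n - 1) ∘L al (n - 1) ∘L a n))

/-- Consecutive pairs `(uₙ, uₙ₊₁)` of the generalised eigenvector with initial data `α`. -/
def genPair (a a' b : ℕ → H →L[ℂ] H) (z : ℂ) (α : H2 H) : ℕ → H × H
  | 0 => (WithLp.equiv 2 (H × H)) α
  | n + 1 =>
      let p := genPair a a' b z α n
      (p.2, a' (n + 1) (z • p.2 - b (n + 1) p.2 - adjoint (a n) p.1))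

/-- The generalised eigenvector with initial data `(u₀, u₁)ᵗ = α`. -/
def genVec (a a' b : ℕ → H →L[ℂ] H) (z : ℂ) (α : H2 H) (n : ℕ) : H :=
  (genPair a a' b z α n).1

/-- Iterated logarithm `log^{(i)}`. -/
def iterLog : ℕ → ℝ → ℝ
  | 0, x => x
  | i + 1, x => Real.log (iterLog i x)

/-- `g_j(x) = ∏_{i=1}^j log^{(i)}(x)`. -/
def gfun (j : ℕ) (x : ℝ) : ℝ := ∏ i ∈ Finset.Icc 1 j, iterLog i x

/-!
Write `vₙ = (uₙ₋₁, uₙ)` and `D_k = diag(a_k, a_k^*)`. Since `Bₙ vₙ = vₙ₊₁` and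
`Xₙ₊₁ Bₙ = B_{n+N} Xₙ`, with `w = Xₙ vₙ` and `k = n + N` we get
`S_{n+1} - Sₙ = Re (⟨D_k E B_k w, Bₙ vₙ⟩ - ⟨D_{k-1} E w, vₙ⟩)`; `sym` is invisible under
`Re ⟨· v, v⟩`. Because `D_k E B_k = [[a_{k-1}^*, -(z - b_k)], [0, a_k^*]]`, this difference
collapses to `⟨a_k^* w₂, P uₙ₋₁ + W uₙ⟩`, where `P` and `W` are the differences of the lower
blocks of `B_k` and `Bₙ`, the latter corrected by `(z - z̄) a_k⁻¹` because
`(z - b_k)^* = z̄ - b_k`. Cauchy–Schwarz and `‖w‖ ≤ ‖Xₙ‖ ‖vₙ‖` then give the bound.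
-/

section

variable {E : Type*} [NormedAddCommGroup E] [InnerProductSpace ℂ E]

lemma blk_apply (A B C D : E →L[ℂ] E) (v : H2 E) :
    blk A B C D v = pr (A v.fst + B v.snd) (C v.fst + D v.snd) := rfl

@[simp] lemma pr_fst (x y : E) : (pr x y).fst = x := rfl

@[simp] lemma pr_snd (x y : E) : (pr x y).snd = y := rfl

lemma inner_pr_left (x y : E) (v : H2 E) :
    inner ℂ (pr x y) v = inner ℂ x v.fst + inner ℂ y v.snd := rfl

lemma norm_pr_sq (x y : E) : ‖pr x y‖ ^ 2 = ‖x‖ ^ 2 + ‖y‖ ^ 2 :=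
  WithLp.prod_norm_sq_eq_of_L2 (pr x y)

lemma prodD_succ_comp (B : ℕ → H2 E →L[ℂ] H2 E) (n k : ℕ) :
    prodD B (n + 1) k ∘L B n = B (n + k) ∘L prodD B n k := by
  induction k with
  | zero => rfl
  | succ k ih =>
    rw [prodD, prodD, comp_assoc, ih, ← comp_assoc, ← comp_assoc, Nat.add_right_comm]
    rfl

lemma re_inner_sym_apply [CompleteSpace E] (T : E →L[ℂ] E) (v : E) :
    (inner ℂ (sym T v) v : ℂ).re = (inner ℂ (T v) v : ℂ).re := by
  rw [sym, smul_apply, add_apply, inner_smul_left, inner_add_left, adjoint_inner_left,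
    ← inner_conj_symm v (T v), Complex.add_conj]
  simp

end

lemma transfer_apply_pr {a b a' : ℕ → H →L[ℂ] H} {z : ℂ} {u : ℕ → H}
    (hu : GenEigRec a b z u) {m : ℕ} (hm : a' (m + 1) ∘L a (m + 1) = 1) :
    transfer a a' b z (m + 1) (pr (u m) (u (m + 1))) = pr (u (m + 1)) (u (m + 2)) := by
  have hrec : a (m + 1) (u (m + 2)) =
      z • u (m + 1) - b (m + 1) (u (m + 1)) - adjoint (a m) (u m) := by
    rw [← hu m]; abel
  have hleft : a' (m + 1) (a (m + 1) (u (m + 2))) = u (m + 2) := congrArg (· (u (m + 2))) hm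
  rw [transfer, blk_apply, ← hleft, hrec]
  simp only [pr_fst, pr_snd, zero_apply, zero_add, neg_apply, comp_apply, sub_apply,
    smul_apply, one_apply_eq_self, map_sub, Nat.add_sub_cancel]
  congr 1
  abel

lemma diag_E_transfer_apply {a a' b : ℕ → H →L[ℂ] H} {z : ℂ} {k : ℕ}
    (hk : a k ∘L a' k = 1) (w : H2 H) :
    blk (a k) 0 0 (adjoint (a k)) (blk 0 (-1) 1 0 (transfer a a' b z k w)) =
      pr (adjoint (a (k - 1)) w.fst - (z • w.snd - b k w.snd)) (adjoint (a k) w.snd) := by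
  have hk' (x : H) : a k (a' k x) = x := congrArg (· x) hk
  simp only [transfer, blk_apply, pr_fst, pr_snd, zero_apply, zero_add, add_zero, neg_apply,
    neg_zero, one_apply_eq_self, comp_apply, sub_apply, smul_apply, map_add, map_neg, map_sub,
    map_smul, smul_zero, sub_zero, hk']
  congr 1
  module

def transferOffDiagGap (a a' : ℕ → H →L[ℂ] H) (n k : ℕ) : H →L[ℂ] H :=
  a' k ∘L adjoint (a (k - 1)) - a' n ∘L adjoint (a (n - 1))

def transferDiagGap (a' b : ℕ → H →L[ℂ] H) (z : ℂ) (n k : ℕ) : H →L[ℂ] H :=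
  a' n ∘L (z • 1 - b n) - a' k ∘L (z • 1 - b k) + (z - starRingEnd ℂ z) • a' k

lemma inner_diag_E_transfer_sub {a a' b : ℕ → H →L[ℂ] H} {z : ℂ} {k : ℕ}
    (hk : a k ∘L a' k = 1) (hbk : IsSelfAdjoint (b k)) (n : ℕ) (w v : H2 H) :
    inner ℂ (blk (a k) 0 0 (adjoint (a k)) (blk 0 (-1) 1 0 (transfer a a' b z k w)))
        (transfer a a' b z n v)
      - inner ℂ (blk (a (k - 1)) 0 0 (adjoint (a (k - 1))) (blk 0 (-1) 1 0 w)) v =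
    inner ℂ (adjoint (a k) w.snd)
      (transferOffDiagGap a a' n k v.fst + transferDiagGap a' b z n k v.snd) := by
  have hk' (x : H) : a k (a' k x) = x := congrArg (· x) hk
  have hbk' (x y : H) : inner ℂ (b k x) y = inner ℂ x (b k y) := by
    rw [← adjoint_inner_right, hbk.adjoint_eq]
  rw [diag_E_transfer_apply hk]
  -- normal form: `a k` and `b k` act in the right slot, `a (k - 1)` in the left one
  simp only [transfer, transferOffDiagGap, transferDiagGap, blk_apply, inner_pr_left, pr_fst,
    pr_snd, adjoint_inner_left (a k), adjoint_inner_right (a (k - 1)), zero_apply, zero_add,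
    add_zero, neg_apply, one_apply_eq_self, comp_apply, add_apply, sub_apply, smul_apply, map_add,
    map_sub, map_neg, map_smul, hk', hbk', inner_add_left, inner_add_right, inner_sub_left,
    inner_sub_right, inner_neg_left, inner_neg_right, inner_zero_left, inner_smul_left,
    inner_smul_right, sub_smul]
  ring

lemma norm_transferDiagGap_le (a' b : ℕ → H →L[ℂ] H) (z : ℂ) (n k : ℕ) :
    ‖transferDiagGap a' b z n k‖ ≤
      ‖z‖ * ‖a' k - a' n‖ + ‖z - starRingEnd ℂ z‖ * ‖a' k‖ + ‖a' k ∘L b k - a' n ∘L b n‖ := by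
  have hsplit : transferDiagGap a' b z n k =
      -(z • (a' k - a' n)) + (z - starRingEnd ℂ z) • a' k + (a' k ∘L b k - a' n ∘L b n) := by
    ext x
    simp only [transferDiagGap, add_apply, sub_apply, neg_apply, smul_apply, comp_apply,
      one_apply_eq_self, map_sub, map_smul]
    module
  rw [hsplit]
  refine (norm_add₃_le ..).trans ?_
  rw [norm_neg, norm_smul, norm_smul]

lemma turanS_eq (a a' b : ℕ → H →L[ℂ] H) (N : ℕ) (z : ℂ) (u : ℕ → H) (n : ℕ) :
    turanS a a' b N z u n =
      (inner ℂ (blk (a (n + N - 1)) 0 0 (adjoint (a (n + N - 1)))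
        (blk 0 (-1) 1 0 (prodD (transfer a a' b z) n N (pr (u (n - 1)) (u n)))))
        (pr (u (n - 1)) (u n))).re :=
  re_inner_sym_apply _ _

lemma turanS_succ_sub {a a' b : ℕ → H →L[ℂ] H} {z : ℂ} {u : ℕ → H}
    (hinv : ∀ n, Inverts (a n) (a' n)) (hb : ∀ n, IsSelfAdjoint (b n))
    (hu : GenEigRec a b z u) (N : ℕ) {n : ℕ} (hn : 1 ≤ n) :
    turanS a a' b N z u (n + 1) - turanS a a' b N z u n =
      (inner ℂ (adjoint (a (n + N)) (prodD (transfer a a' b z) n N (pr (u (n - 1)) (u n))).snd)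
        (transferOffDiagGap a a' n (n + N) (u (n - 1)) +
          transferDiagGap a' b z n (n + N) (u n))).re := by
  obtain ⟨m, rfl⟩ : ∃ m, n = m + 1 := ⟨n - 1, by omega⟩
  have hstep := transfer_apply_pr hu (hinv (m + 1)).1
  have hshift := congrArg (· (pr (u m) (u (m + 1))))
    (prodD_succ_comp (transfer a a' b z) (m + 1) N)
  simp only [comp_apply, hstep] at hshift
  rw [turanS_eq, turanS_eq, show m + 1 + 1 + N - 1 = m + 1 + N by omega]
  simp only [Nat.add_sub_cancel]
  rw [hshift, ← hstep, ← Complex.sub_re, inner_diag_E_transfer_sub (hinv _).2 (hb _), pr_fst,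
    pr_snd]

lemma abs_re_inner_adjoint_le (A P Q : H →L[ℂ] H) (w : H2 H) (x y : H) :
    |(inner ℂ (adjoint A w.snd) (P x + Q y)).re| ≤ ‖A‖ * (‖P‖ + ‖Q‖) * ‖w‖ * ‖pr x y‖ := by
  have hx : ‖x‖ ≤ ‖pr x y‖ := WithLp.norm_fst_le H (pr x y)
  have hy : ‖y‖ ≤ ‖pr x y‖ := WithLp.norm_snd_le H (pr x y)
  have hw : ‖w.snd‖ ≤ ‖w‖ := WithLp.norm_snd_le H w
  calc |(inner ℂ (adjoint A w.snd) (P x + Q y)).re|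
      ≤ ‖adjoint A w.snd‖ * ‖P x + Q y‖ :=
        (Complex.abs_re_le_norm _).trans (norm_inner_le_norm _ _)
    _ ≤ (‖A‖ * ‖w‖) * (‖P‖ * ‖pr x y‖ + ‖Q‖ * ‖pr x y‖) := by
      gcongr
      · exact (le_opNorm _ _).trans (by rw [LinearIsometryEquiv.norm_map]; gcongr)
      · exact (norm_add_le _ _).trans (add_le_add ((le_opNorm _ _).trans (by gcongr))
          ((le_opNorm _ _).trans (by gcongr)))
    _ = ‖A‖ * (‖P‖ + ‖Q‖) * ‖w‖ * ‖pr x y‖ := by ring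

theorem statement19_general (a b a' : ℕ → H →L[ℂ] H)
    (hinv : ∀ n, Inverts (a n) (a' n)) (hb : ∀ n, IsSelfAdjoint (b n))
    (N : ℕ) (z : ℂ) (u : ℕ → H)
    (hu : GenEigRec a b z u) :
    ∀ n : ℕ, 1 ≤ n →
      |turanS a a' b N z u (n + 1) - turanS a a' b N z u n| ≤
        ‖prodD (transfer a a' b z) n N‖ * ‖a (n + N)‖ *
          (‖a' (n + N) ∘L adjoint (a (n + N - 1)) - a' n ∘L adjoint (a (n - 1))‖
            + ‖z‖ * ‖a' (n + N) - a' n‖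
            + ‖z - (starRingEnd ℂ) z‖ * ‖a' (n + N)‖
            + ‖a' (n + N) ∘L b (n + N) - a' n ∘L b n‖) *
          (‖u (n - 1)‖ ^ 2 + ‖u n‖ ^ 2) := by
  intro n hn
  set X := prodD (transfer a a' b z) n N
  set v := pr (u (n - 1)) (u n)
  rw [turanS_succ_sub hinv hb hu N hn, ← norm_pr_sq]
  calc _ ≤ ‖a (n + N)‖ * (‖transferOffDiagGap a a' n (n + N)‖ +
          ‖transferDiagGap a' b z n (n + N)‖) * ‖X v‖ * ‖v‖ :=
        abs_re_inner_adjoint_le _ _ _ _ _ _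
    _ ≤ ‖a (n + N)‖ * (‖transferOffDiagGap a a' n (n + N)‖ + (‖z‖ * ‖a' (n + N) - a' n‖
          + ‖z - (starRingEnd ℂ) z‖ * ‖a' (n + N)‖ + ‖a' (n + N) ∘L b (n + N) - a' n ∘L b n‖))
          * (‖X‖ * ‖v‖) * ‖v‖ := by
        gcongr
        exacts [norm_transferDiagGap_le .., le_opNorm X v]
    _ = _ := by rw [transferOffDiagGap]; ring

/-- Lemma `lem:3`. -/
theorem statement19 (a b a' : ℕ → H →L[ℂ] H)
    (hinv : ∀ n, Inverts (a n) (a' n)) (hb : ∀ n, IsSelfAdjoint (b n))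
    (N : ℕ) (hN : 0 < N) (z : ℂ) (α : H2 H) (u : ℕ → H)
    (hu : GenEigRec a b z u) (hα : pr (u 0) (u 1) = α) :
    ∀ n : ℕ, 1 ≤ n →
      |turanS a a' b N z u (n + 1) - turanS a a' b N z u n| ≤
        ‖prodD (transfer a a' b z) n N‖ * ‖a (n + N)‖ *
          (‖a' (n + N) ∘L adjoint (a (n + N - 1)) - a' n ∘L adjoint (a (n - 1))‖
            + ‖z‖ * ‖a' (n + N) - a' n‖
            + ‖z - (starRingEnd ℂ) z‖ * ‖a' (n + N)‖
            + ‖a' (n + N) ∘L b (n + N) - a' n ∘L b n‖) *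
          (‖u (n - 1)‖ ^ 2 + ‖u n‖ ^ 2) :=
  statement19_general a b a' hinv hb N z u hu
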